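/- arXiv:1909.08318 — 2 statements merged into one kernel-verified Lean document; each statement's English description precedes it below -/
import Mathlib

section
/- Let 1 → A → E → Γ → 1 be an extension of profinite groups with A abelian, written as the projective limit over a cofiltered system of extensions 1 → A_j → E_j → Γ → 1 with A_j finite abelian and surjective transition maps. If each extension E_j splits and each H^1(Γ, A_j) is finite, then E splits. -/
open CategoryTheory

section Aux

variable {Γ : Type*} [Group Γ] [TopologicalSpace Γ]

/-- The type of continuous splittings of `p : E →* Γ`. -/
def AuxSpl {E : Type*} [Group E] [TopologicalSpace E] (p : E →* Γ) : Type _ :=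
  {s : Γ →* E // Continuous s ∧ p.comp s = MonoidHom.id Γ}

/-- Splittings up to conjugacy by elements of the kernel. -/
instance auxSetoid {E : Type*} [Group E] [TopologicalSpace E] (p : E →* Γ) :
    Setoid (AuxSpl p) where
  r s s' := ∃ a ∈ p.ker, ∀ γ, (s'.1 : Γ →* E) γ = a * (s.1 : Γ →* E) γ * a⁻¹
  iseqv := by
    refine ⟨fun s => ⟨1, one_mem _, fun γ => by group⟩, ?_, ?_⟩
    · rintro s s' ⟨a, ha, h⟩
      exact ⟨a⁻¹, inv_mem ha, fun γ => by rw [h γ]; group⟩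
    · rintro s s' s'' ⟨a, ha, h⟩ ⟨b, hb, h'⟩
      exact ⟨b * a, mul_mem hb ha, fun γ => by rw [h' γ, h γ]; group⟩

/-- Pushing forward a splitting along a compatible homomorphism. -/
def AuxSpl.map {E E' : Type*} [Group E] [TopologicalSpace E] [Group E'] [TopologicalSpace E']
    {p : E →* Γ} {p' : E' →* Γ} (f : E →* E') (hf : Continuous f) (hfp : p'.comp f = p)
    (s : AuxSpl p) : AuxSpl p' :=
  ⟨f.comp s.1, hf.comp s.2.1, by rw [← MonoidHom.comp_assoc, hfp, s.2.2]⟩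

theorem AuxSpl.map_rel {E E' : Type*} [Group E] [TopologicalSpace E] [Group E']
    [TopologicalSpace E'] {p : E →* Γ} {p' : E' →* Γ} (f : E →* E') (hf : Continuous f)
    (hfp : p'.comp f = p) {s s' : AuxSpl p} (h : s ≈ s') :
    AuxSpl.map f hf hfp s ≈ AuxSpl.map f hf hfp s' := by
  obtain ⟨a, ha, h⟩ := h
  refine ⟨f a, ?_, fun γ => ?_⟩
  · rw [MonoidHom.mem_ker, ← MonoidHom.comp_apply, hfp, MonoidHom.mem_ker.mp ha]
  · show f (s'.1 γ) = f a * f (s.1 γ) * (f a)⁻¹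
    rw [h γ]
    simp [map_mul]

end Aux

/-- Let `1 → A → E → Γ → 1` be an extension of profinite groups with `A` abelian, written as a
projective limit over a cofiltered system of extensions `1 → A_j → Ej j → Γ → 1` with `A_j`
finite abelian and surjective transition maps.  If each extension `Ej j` splits and each
`H^1(Γ, A_j)` is finite (expressed as finiteness of the set of continuous cocycles, twisted by
any splitting `σ`, modulo coboundaries), then `E` splits. -/
theorem stmt_4
    (Γ : Type*) [Group Γ] [TopologicalSpace Γ] [IsTopologicalGroup Γ]
    [CompactSpace Γ] [TotallyDisconnectedSpace Γ]
    (E : Type*) [Group E] [TopologicalSpace E] [IsTopologicalGroup E]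
    [CompactSpace E] [TotallyDisconnectedSpace E]
    (π : E →* Γ) (hπc : Continuous π) (hπs : Function.Surjective π)
    (habel : ∀ a ∈ π.ker, ∀ b ∈ π.ker, a * b = b * a)
    (J : Type*) [Preorder J] [Nonempty J] (hdir : ∀ i j : J, ∃ k, i ≤ k ∧ j ≤ k)
    (Ej : J → Type*) [∀ j, Group (Ej j)] [∀ j, Fintype (Ej j)]
    [∀ j, TopologicalSpace (Ej j)] [∀ j, DiscreteTopology (Ej j)]
    (pj : ∀ j, E →* Ej j) (hpc : ∀ j, Continuous (pj j)) (hps : ∀ j, Function.Surjective (pj j))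
    (πj : ∀ j, Ej j →* Γ) (hcompat : ∀ j, (πj j).comp (pj j) = π)
    (tr : ∀ {i j : J}, i ≤ j → (Ej j →* Ej i))
    (htr : ∀ {i j : J} (h : i ≤ j), (tr h).comp (pj j) = pj i)
    (hker : (⨅ j, (pj j).ker) = ⊥)
    (hAab : ∀ j, ∀ a ∈ (πj j).ker, ∀ b ∈ (πj j).ker, a * b = b * a)
    (hsplit : ∀ j, ∃ s : Γ →* Ej j, Continuous s ∧ (πj j).comp s = MonoidHom.id Γ)
    (hH1fin : ∀ (j : J) (σ : Γ →* Ej j), Continuous σ → (πj j).comp σ = MonoidHom.id Γ →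
      Finite (Quot (fun c c' :
          {c : Γ → Ej j // Continuous c ∧ (∀ γ, c γ ∈ (πj j).ker) ∧
            ∀ γ δ, c (γ * δ) = c γ * (σ γ * c δ * (σ γ)⁻¹)} =>
        ∃ a ∈ (πj j).ker, ∀ γ, (c' : Γ → Ej j) γ =
          a * (c : Γ → Ej j) γ * (σ γ * a⁻¹ * (σ γ)⁻¹)))) :
    ∃ s : Γ →* E, Continuous s ∧ π.comp s = MonoidHom.id Γ := by
  classical
  haveI : IsDirected J (· ≤ ·) := ⟨hdir⟩
  haveI : ∀ j, IsTopologicalGroup (Ej j) := fun j =>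
    { continuous_mul := continuous_of_discreteTopology
      continuous_inv := continuous_of_discreteTopology }
  -- pointwise versions of the compatibilities
  have htr' : ∀ {i j : J} (h : i ≤ j) (x : E), tr h (pj j x) = pj i x := fun h x =>
    DFunLike.congr_fun (htr h) x
  have hcompat' : ∀ (j : J) (x : E), πj j (pj j x) = π x := fun j x =>
    DFunLike.congr_fun (hcompat j) x
  have hπtr : ∀ {i j : J} (h : i ≤ j), (πj i).comp (tr h) = πj j := by
    intro i j h
    ext e
    obtain ⟨x, rfl⟩ := hps j e
    rw [MonoidHom.comp_apply, htr' h x, hcompat' i x, hcompat' j x]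
  have htr_refl : ∀ (j : J) (h : j ≤ j) (e : Ej j), tr h e = e := by
    intro j h e
    obtain ⟨x, rfl⟩ := hps j e
    rw [htr' h x]
  have htr_trans : ∀ {i j k : J} (h1 : i ≤ j) (h2 : j ≤ k) (e : Ej k),
      tr h1 (tr h2 e) = tr (h1.trans h2) e := by
    intro i j k h1 h2 e
    obtain ⟨x, rfl⟩ := hps k e
    rw [htr' h2 x, htr' h1 x, htr' (h1.trans h2) x]
  -- Step 1: each quotient of splittings by conjugacy is finite and nonempty.
  haveI hfinQ : ∀ j : J, Finite (Quotient (auxSetoid (πj j))) := by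
    intro j
    obtain ⟨σ, hσc, hσs⟩ := hsplit j
    have hσγ : ∀ γ, πj j (σ γ) = γ := fun γ => DFunLike.congr_fun hσs γ
    set Z := {c : Γ → Ej j // Continuous c ∧ (∀ γ, c γ ∈ (πj j).ker) ∧
      ∀ γ δ, c (γ * δ) = c γ * (σ γ * c δ * (σ γ)⁻¹)} with hZ
    set rel := fun c c' : Z => ∃ a ∈ (πj j).ker, ∀ γ, (c' : Γ → Ej j) γ =
          a * (c : Γ → Ej j) γ * (σ γ * a⁻¹ * (σ γ)⁻¹) with hrel
    have hfin : Finite (Quot rel) := hH1fin j σ hσc hσs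
    let g : Z → AuxSpl (πj j) := fun c =>
      ⟨MonoidHom.mk' (fun γ => c.1 γ * σ γ) (by
          intro γ δ
          show c.1 (γ * δ) * σ (γ * δ) = c.1 γ * σ γ * (c.1 δ * σ δ)
          rw [c.2.2.2 γ δ, map_mul]
          group),
        c.2.1.mul hσc,
        by
          ext γ
          show πj j (c.1 γ * σ γ) = γ
          rw [map_mul, MonoidHom.mem_ker.mp (c.2.2.1 γ), hσγ γ, one_mul]⟩
    let gbar : Quot rel → Quotient (auxSetoid (πj j)) :=
      Quot.lift (fun c => Quotient.mk (auxSetoid (πj j)) (g c)) (by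
        rintro c c' ⟨a, ha, h⟩
        refine Quotient.sound ⟨a, ha, fun γ => ?_⟩
        show c'.1 γ * σ γ = a * (c.1 γ * σ γ) * a⁻¹
        rw [h γ]
        group)
    have hsurj : Function.Surjective gbar := by
      intro q
      obtain ⟨s, rfl⟩ := Quotient.exists_rep q
      have hsγ : ∀ γ, πj j (s.1 γ) = γ := fun γ => DFunLike.congr_fun s.2.2 γ
      refine ⟨Quot.mk rel ⟨fun γ => s.1 γ * (σ γ)⁻¹, ?_, ?_, ?_⟩, ?_⟩
      · exact s.2.1.mul hσc.inv
      · intro γ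
        rw [MonoidHom.mem_ker, map_mul, map_inv, hsγ γ, hσγ γ, mul_inv_cancel]
      · intro γ δ
        show s.1 (γ * δ) * (σ (γ * δ))⁻¹ =
          s.1 γ * (σ γ)⁻¹ * (σ γ * (s.1 δ * (σ δ)⁻¹) * (σ γ)⁻¹)
        rw [map_mul, map_mul]
        group
      · show Quotient.mk (auxSetoid (πj j)) _ = Quotient.mk (auxSetoid (πj j)) s
        congr 1
        refine Subtype.ext (MonoidHom.ext fun γ => ?_)
        show s.1 γ * (σ γ)⁻¹ * σ γ = s.1 γ
        group
    exact Finite.of_surjective gbar hsurj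
  haveI hneQ : ∀ j : J, Nonempty (Quotient (auxSetoid (πj j))) := by
    intro j
    obtain ⟨σ, hσc, hσs⟩ := hsplit j
    exact ⟨Quotient.mk (auxSetoid (πj j)) ⟨σ, hσc, hσs⟩⟩
  -- Step 2: choose a compatible family of conjugacy classes.
  let F : Jᵒᵖ ⥤ Type _ :=
    { obj := fun X => Quotient (auxSetoid (πj X.unop))
      map := fun {X Y} f => TypeCat.ofHom (Quotient.map
        (AuxSpl.map (tr f.unop.le) continuous_of_discreteTopology (hπtr f.unop.le))
        (fun s s' h => AuxSpl.map_rel _ _ _ h))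
      map_id := by
        intro X
        ext q
        obtain ⟨s, rfl⟩ := Quotient.exists_rep q
        show Quotient.mk _ _ = Quotient.mk _ s
        congr 1
        exact Subtype.ext (MonoidHom.ext fun γ => htr_refl _ _ _)
      map_comp := by
        intro X Y Z f g
        ext q
        obtain ⟨s, rfl⟩ := Quotient.exists_rep q
        show Quotient.mk _ _ = Quotient.mk _ _
        congr 1
        exact Subtype.ext (MonoidHom.ext fun γ => (htr_trans _ _ _).symm) }
  haveI : ∀ X : Jᵒᵖ, Finite (F.obj X) := fun X => hfinQ X.unop
  haveI : ∀ X : Jᵒᵖ, Nonempty (F.obj X) := fun X => hneQ X.unop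
  obtain ⟨u, hu⟩ := nonempty_sections_of_finite_inverse_system F
  -- Step 3: choose a compatible family of splittings within the chosen classes.
  let G : Jᵒᵖ ⥤ Type _ :=
    { obj := fun X => {s : AuxSpl (πj X.unop) // Quotient.mk (auxSetoid (πj X.unop)) s = u X}
      map := fun {X Y} f => TypeCat.ofHom fun s =>
        ⟨AuxSpl.map (tr f.unop.le) continuous_of_discreteTopology (hπtr f.unop.le) s.1, by
          show F.map f (Quotient.mk (auxSetoid (πj X.unop)) s.1) = u Y
          rw [s.2]
          exact hu f⟩
      map_id := by
        intro X
        ext s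
        refine Subtype.ext (MonoidHom.ext fun γ => htr_refl _ _ _)
      map_comp := by
        intro X Y Z f g
        ext s
        refine Subtype.ext (MonoidHom.ext fun γ => (htr_trans _ _ _).symm) }
  haveI hGfin : ∀ X : Jᵒᵖ, Finite (G.obj X) := by
    intro X
    have s₀ : AuxSpl (πj X.unop) := (u X).out
    let conjS : (πj X.unop).ker → AuxSpl (πj X.unop) := fun a =>
      ⟨MonoidHom.mk' (fun γ => a.1 * (u X).out.1 γ * a.1⁻¹) (by
          intro γ δ
          show a.1 * (u X).out.1 (γ * δ) * a.1⁻¹ =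
            a.1 * (u X).out.1 γ * a.1⁻¹ * (a.1 * (u X).out.1 δ * a.1⁻¹)
          rw [map_mul]
          group),
        (continuous_const.mul (u X).out.2.1).mul continuous_const, by
          ext γ
          have h2 : πj X.unop ((u X).out.1 γ) = γ := DFunLike.congr_fun (u X).out.2.2 γ
          show πj X.unop (a.1 * (u X).out.1 γ * a.1⁻¹) = γ
          rw [map_mul, map_mul, map_inv, MonoidHom.mem_ker.mp a.2, h2]
          group⟩
    let conj : (πj X.unop).ker → G.obj X := fun a =>
      ⟨conjS a, by
        conv_rhs => rw [← Quotient.out_eq (u X)]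
        exact Quotient.sound ⟨a.1⁻¹, inv_mem a.2, fun γ => by
          show (u X).out.1 γ = a.1⁻¹ * (a.1 * (u X).out.1 γ * a.1⁻¹) * a.1⁻¹⁻¹
          group⟩⟩
    have hsurj : Function.Surjective conj := by
      rintro ⟨s, hs⟩
      obtain ⟨b, hb, h⟩ := Quotient.exact (hs.trans (Quotient.out_eq (u X)).symm)
      refine ⟨⟨b⁻¹, inv_mem hb⟩, Subtype.ext (Subtype.ext (MonoidHom.ext fun γ => ?_))⟩
      show b⁻¹ * (u X).out.1 γ * b⁻¹⁻¹ = s.1 γ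
      rw [h γ]
      group
    exact Finite.of_surjective conj hsurj
  haveI hGne : ∀ X : Jᵒᵖ, Nonempty (G.obj X) := fun X => ⟨⟨(u X).out, Quotient.out_eq _⟩⟩
  obtain ⟨v, hv⟩ := nonempty_sections_of_finite_inverse_system G
  -- the compatible family of splittings
  let sj : ∀ j : J, AuxSpl (πj j) := fun j => (v (Opposite.op j)).1
  have hsj : ∀ {i j : J} (h : i ≤ j) (γ : Γ), tr h ((sj j).1 γ) = (sj i).1 γ := by
    intro i j h γ
    have hvf := hv ((homOfLE h).op : Opposite.op j ⟶ Opposite.op i)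
    exact DFunLike.congr_fun (congrArg (fun t => (Subtype.val t).val) hvf) γ
  have hsjγ : ∀ (j : J) (γ : Γ), πj j ((sj j).1 γ) = γ := fun j γ =>
    DFunLike.congr_fun (sj j).2.2 γ
  -- uniqueness from triviality of the intersection of the kernels
  have uniq : ∀ x y : E, (∀ j, pj j x = pj j y) → x = y := by
    intro x y h
    have hx : x * y⁻¹ ∈ ⨅ j, (pj j).ker := by
      rw [Subgroup.mem_iInf]
      intro j
      rw [MonoidHom.mem_ker, map_mul, map_inv, h j, mul_inv_cancel]
    rw [hker, Subgroup.mem_bot] at hx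
    exact mul_inv_eq_one.mp hx
  -- existence of compatible lifts by compactness
  have hne : ∀ γ : Γ, (⋂ j, (pj j) ⁻¹' {(sj j).1 γ}).Nonempty := by
    intro γ
    apply IsCompact.nonempty_iInter_of_directed_nonempty_isCompact_isClosed
    · intro i j
      obtain ⟨k, hik, hjk⟩ := hdir i j
      refine ⟨k, fun x hx => ?_, fun x hx => ?_⟩ <;>
        simp only [Set.mem_preimage, Set.mem_singleton_iff] at *
      · rw [← hsj hik γ, ← hx, htr' hik x]
      · rw [← hsj hjk γ, ← hx, htr' hjk x]
    · intro j
      exact hps j ((sj j).1 γ)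
    · intro j
      exact ((isClosed_discrete _).preimage (hpc j)).isCompact
    · intro j
      exact (isClosed_discrete _).preimage (hpc j)
  choose e he using hne
  have he' : ∀ γ (j : J), pj j (e γ) = (sj j).1 γ := fun γ j => Set.mem_iInter.mp (he γ) j
  -- the limit splitting
  let s : Γ →* E := MonoidHom.mk' e (by
    intro γ δ
    apply uniq
    intro j
    rw [he' (γ * δ) j, map_mul (pj j), he' γ j, he' δ j, ← map_mul])
  -- continuity
  have h1cl : IsClosed ({1} : Set E) := by
    have h := isClosed_connectedComponent (x := (1 : E))
    rwa [connectedComponent_eq_singleton] at h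
  haveI : T2Space E := IsTopologicalGroup.t2Space_iff_one_closed.mpr h1cl
  have hfc : Continuous (fun x j => pj j x : E → ∀ j, Ej j) := continuous_pi fun j => hpc j
  have hfi : Function.Injective (fun x j => pj j x : E → ∀ j, Ej j) := fun x y h =>
    uniq x y fun j => congrFun h j
  have hemb := hfc.isClosedEmbedding hfi
  have hsc : Continuous e := by
    rw [hemb.toIsEmbedding.continuous_iff]
    apply continuous_pi
    intro j
    have : (fun γ => pj j (e γ)) = fun γ => (sj j).1 γ := funext fun γ => he' γ j
    show Continuous fun γ => pj j (e γ)
    rw [this]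
    exact (sj j).2.1
  refine ⟨s, hsc, ?_⟩
  ext γ
  obtain ⟨j⟩ := ‹Nonempty J›
  show π (e γ) = γ
  rw [← hcompat' j (e γ), he' γ j, hsjγ j γ]
end

section
/- Let Γ be a profinite group such that H^1(Γ, M) is finite for every finite Γ-module M annihilated by a prime p. Then for every profinite Γ-module A which is a projective limit of finite Γ-modules annihilated by p, and every extension 1 → A → E → Γ → 1 of profinite groups, the extension splits if and only if every finite quotient extension (pushout along A → A_j for A_j a finite quotient Γ-module) splits. -/
section ContH1Defs

variable {Γ M : Type*} [Group Γ] [TopologicalSpace Γ] [AddCommGroup M] [TopologicalSpace M]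
  [IsTopologicalAddGroup M]

/-- Continuous 1-cocycles of a profinite group `Γ` with values in a topological `Γ`-module. -/
def contZ1 (ρ : Γ →* Multiplicative (AddAut M)) : AddSubgroup (Γ → M) where
  carrier := {f | Continuous f ∧ ∀ g h : Γ, f (g * h) = f g + (ρ g).toAdd (f h)}
  add_mem' := by
    rintro f g ⟨hfc, hf⟩ ⟨hgc, hg⟩
    refine ⟨hfc.add hgc, fun a b => ?_⟩
    simp only [Pi.add_apply, hf a b, hg a b, map_add]
    abel
  zero_mem' := ⟨continuous_const, fun a b => by simp⟩
  neg_mem' := by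
    rintro f ⟨hfc, hf⟩
    refine ⟨hfc.neg, fun a b => ?_⟩
    simp only [Pi.neg_apply, hf a b, map_neg]
    abel

/-- The coboundary homomorphism `M →+ (Γ → M)`, `m ↦ (g ↦ ρ g m - m)`. -/
def coboundaryHom (ρ : Γ →* Multiplicative (AddAut M)) : M →+ (Γ → M) where
  toFun m := fun g => (ρ g).toAdd m - m
  map_zero' := by ext g; simp
  map_add' := by
    intro m n; ext g
    simp only [map_add, Pi.add_apply]
    abel

/-- Continuous first group cohomology `H^1(Γ, M)`: continuous 1-cocycles modulo coboundaries. -/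
def ContH1 (ρ : Γ →* Multiplicative (AddAut M)) : Type _ :=
  ↥(contZ1 ρ) ⧸ ((coboundaryHom ρ).range.addSubgroupOf (contZ1 ρ))

end ContH1Defs

open Topology

/-- totally disconnected implies T1 -/
lemma aux_t1 {X : Type*} [TopologicalSpace X] [TotallyDisconnectedSpace X] : T1Space X :=
  ⟨fun x => by rw [← connectedComponent_eq_singleton x]; exact isClosed_connectedComponent⟩

/-- `MulAut` to `AddAut` on `Additive`. -/
def mulAutToAddAut (X : Type*) [Monoid X] : MulAut X →* Multiplicative (AddAut (Additive X)) where
  toFun φ := Multiplicative.ofAdd (AddEquiv.mk' φ.toEquiv φ.map_mul)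
  map_one' := rfl
  map_mul' _ _ := rfl

lemma mulAutToAddAut_apply {X : Type*} [Monoid X] (φ : MulAut X) (a : Additive X) :
    (mulAutToAddAut X φ).toAdd a = Additive.ofMul (φ a.toMul) := rfl

/-- Main auxiliary lemma: the set of continuous splittings of an extension of `Γ` by a
finite abelian `p`-torsion kernel is finite, given finiteness of `H¹`. -/
lemma splittings_finite (p : ℕ)
    (Γ : Type) [Group Γ] [TopologicalSpace Γ] [IsTopologicalGroup Γ]
    [CompactSpace Γ] [T2Space Γ]
    (hH : ∀ (M : Type) [AddCommGroup M] [TopologicalSpace M] [DiscreteTopology M]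
        [IsTopologicalAddGroup M] [Finite M]
        (ρ : Γ →* Multiplicative (AddAut M)), (∀ m : M, p • m = 0) →
        Continuous (fun x : Γ × M => (ρ x.1).toAdd x.2) → Finite (ContH1 ρ))
    (Eb : Type) [Group Eb] [TopologicalSpace Eb] [IsTopologicalGroup Eb]
    [CompactSpace Eb] [T2Space Eb]
    (pr : Eb →* Γ) (hc : Continuous pr) (hs : Function.Surjective pr)
    (habel : ∀ a ∈ pr.ker, ∀ b ∈ pr.ker, a * b = b * a)
    (htors : ∀ a ∈ pr.ker, a ^ p = 1)
    (hfin : Finite pr.ker) :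
    {s : Γ →* Eb | Continuous s ∧ pr.comp s = MonoidHom.id Γ}.Finite := by
  classical
  set S := {s : Γ →* Eb | Continuous s ∧ pr.comp s = MonoidHom.id Γ} with hS
  rcases S.eq_empty_or_nonempty with h | ⟨s₀, hs₀⟩
  · simp [h]
  obtain ⟨hs₀c, hs₀sec⟩ := hs₀
  have hsec₀ : ∀ g, pr (s₀ g) = g := fun g => DFunLike.congr_fun hs₀sec g
  set A' : Subgroup Eb := pr.ker with hA'
  haveI : Finite ↥A' := hfin
  haveI : DiscreteTopology ↥A' := inferInstance
  -- conjugation action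
  set conj' : Eb →* MulAut ↥A' := MulAut.conjNormal with hconj'
  have conj_ker : ∀ a ∈ A', conj' a = 1 := by
    intro a ha
    ext b
    show ((conj' a b : ↥A') : Eb) = b
    rw [hconj', MulAut.conjNormal_apply, habel a ha b b.2]
    group
  have conj_eq : ∀ e e', pr e = pr e' → conj' e = conj' e' := by
    intro e e' h
    have hm : e'⁻¹ * e ∈ A' := by
      simp [hA', MonoidHom.mem_ker, h]
    calc conj' e = conj' (e' * (e'⁻¹ * e)) := by group
    _ = conj' e' * conj' (e'⁻¹ * e) := by rw [map_mul]
    _ = conj' e' := by rw [conj_ker _ hm, mul_one]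
  set σ₀ : Γ → Eb := Function.surjInv hs with hσ₀
  have hσ₀sec : ∀ g, pr (σ₀ g) = g := fun g => Function.surjInv_eq hs g
  set μ : Γ →* MulAut ↥A' :=
    { toFun := fun g => conj' (σ₀ g)
      map_one' := by
        show conj' (σ₀ 1) = 1
        rw [conj_eq (σ₀ 1) 1 (by simp [hσ₀sec]), map_one]
      map_mul' := fun g h => by
        show conj' (σ₀ (g * h)) = conj' (σ₀ g) * conj' (σ₀ h)
        rw [conj_eq (σ₀ (g * h)) (σ₀ g * σ₀ h) (by simp [hσ₀sec]), map_mul] } with hμ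
  have μ_eq : ∀ e : Eb, μ (pr e) = conj' e := fun e => conj_eq _ e (hσ₀sec _)
  -- the additive module
  letI : CommGroup ↥A' :=
    { (inferInstance : Group ↥A') with
      mul_comm := fun a b => Subtype.ext (habel _ a.2 _ b.2) }
  set M : Type := Additive ↥A' with hM
  haveI : DiscreteTopology M := ⟨DiscreteTopology.eq_bot (α := ↥A')⟩
  haveI : IsTopologicalAddGroup M := ⟨⟩
  haveI : Finite M := ‹Finite ↥A'›
  set ρ : Γ →* Multiplicative (AddAut M) := (mulAutToAddAut ↥A').comp μ with hρ
  have ρ_apply : ∀ (g : Γ) (m : M), (ρ g).toAdd m = Additive.ofMul (μ g m.toMul) := fun g m => rfl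
  have htorsM : ∀ m : M, p • m = 0 := by
    intro m
    have h1 : (m.toMul : Eb) ^ p = 1 := htors _ m.toMul.2
    have h2 : m.toMul ^ p = 1 := Subtype.ext (by simpa using h1)
    calc p • m = p • Additive.ofMul m.toMul := rfl
    _ = Additive.ofMul (m.toMul ^ p) := (ofMul_pow p m.toMul).symm
    _ = 0 := by rw [h2]; rfl
  -- continuity of the action
  have hqm : IsQuotientMap pr := (hc.isClosedMap).isQuotientMap hc hs
  have openV : ∀ m m' : M, IsOpen {g : Γ | (ρ g).toAdd m = m'} := by
    intro m m'
    have hWc : Continuous fun e : Eb => conj' e m.toMul := by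
      apply Continuous.subtype_mk
      show Continuous fun e : Eb => e * (m.toMul : Eb) * e⁻¹
      fun_prop
    have hWo : IsOpen {e : Eb | conj' e m.toMul = m'.toMul} :=
      hWc.isOpen_preimage {m'.toMul} (isOpen_discrete _)
    have hsat : pr ⁻¹' {g : Γ | (ρ g).toAdd m = m'} = {e : Eb | conj' e m.toMul = m'.toMul} := by
      ext e
      simp only [Set.mem_preimage, Set.mem_setOf_eq, ρ_apply, μ_eq]
      constructor
      · intro h; exact (Additive.ofMul.injective h : _)
      · intro h; rw [h]; rfl
    rw [← hqm.isOpen_preimage, hsat]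
    exact hWo
  have hcont : Continuous (fun x : Γ × M => (ρ x.1).toAdd x.2) := by
    rw [continuous_discrete_rng]
    intro m'
    have : (fun x : Γ × M => (ρ x.1).toAdd x.2) ⁻¹' {m'}
        = ⋃ m : M, {g : Γ | (ρ g).toAdd m = m'} ×ˢ ({m} : Set M) := by
      ext ⟨g, m⟩
      simp only [Set.mem_preimage, Set.mem_singleton_iff, Set.mem_iUnion, Set.mem_prod,
        Set.mem_setOf_eq]
      constructor
      · intro hx; exact ⟨m, hx, rfl⟩
      · rintro ⟨m₁, h1, rfl⟩; exact h1
    rw [this]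
    exact isOpen_iUnion fun m => (openV m m').prod (isOpen_discrete _)
  haveI hFinH1 : Finite (ContH1 ρ) := hH M ρ htorsM hcont
  -- the group of continuous cocycles is finite
  set Z := contZ1 ρ with hZ
  set B := (coboundaryHom ρ).range.addSubgroupOf Z with hB
  haveI : Finite ↥(coboundaryHom ρ).range :=
    Finite.of_surjective
      (fun m : M => (⟨coboundaryHom ρ m, AddMonoidHom.mem_range.2 ⟨m, rfl⟩⟩ :
        ↥(coboundaryHom ρ).range))
      (by rintro ⟨_, m, rfl⟩; exact ⟨m, rfl⟩)
  haveI : Finite ↥B :=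
    Finite.of_injective (fun b : ↥B => (⟨(b : ↥Z).1, b.2⟩ : ↥(coboundaryHom ρ).range))
      (fun b b' h => Subtype.ext (Subtype.ext (congrArg Subtype.val h :)))
  haveI hQf : Finite (↥Z ⧸ B) := hFinH1
  haveI hZf : Finite ↥Z :=
    Finite.of_equiv _ (AddSubgroup.addGroupEquivQuotientProdAddSubgroup (s := B)).symm
  -- the difference-cocycle map is injective from S into Z
  have memA : ∀ s ∈ S, ∀ g : Γ, s g * (s₀ g)⁻¹ ∈ A' := by
    intro s hsS g
    have h1 : pr (s g) = g := DFunLike.congr_fun hsS.2 g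
    simp [hA', MonoidHom.mem_ker, h1, hsec₀ g]
  set F : (Γ →* Eb) → Γ → M := fun s g =>
    if hsg : s g * (s₀ g)⁻¹ ∈ A' then Additive.ofMul (⟨_, hsg⟩ : ↥A') else 0 with hFdef
  have Fval : ∀ s (hsS : s ∈ S), ∀ g,
      F s g = Additive.ofMul (⟨s g * (s₀ g)⁻¹, memA s hsS g⟩ : ↥A') := by
    intro s hsS g
    simp only [hFdef, dif_pos (memA s hsS g)]
  have hμg : ∀ g : Γ, ∀ b : ↥A', ((μ g b : ↥A') : Eb) = s₀ g * b * (s₀ g)⁻¹ := by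
    intro g b
    have h1 : μ g = conj' (s₀ g) := by have := μ_eq (s₀ g); rwa [hsec₀ g] at this
    rw [h1, hconj', MulAut.conjNormal_apply]
  have hFZ : ∀ s ∈ S, F s ∈ Z := by
    intro s hsS
    constructor
    · have : Continuous fun g => (⟨s g * (s₀ g)⁻¹, memA s hsS g⟩ : ↥A') :=
        Continuous.subtype_mk (hsS.1.mul hs₀c.inv) _
      have h2 : Continuous fun g => (Additive.ofMul (⟨s g * (s₀ g)⁻¹, memA s hsS g⟩ : ↥A') : M) :=
        continuous_ofMul.comp this
      exact h2.congr fun g => (Fval s hsS g).symm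
    · intro g h
      have key : (⟨s (g * h) * (s₀ (g * h))⁻¹, memA s hsS (g * h)⟩ : ↥A')
          = ⟨s g * (s₀ g)⁻¹, memA s hsS g⟩ * μ g ⟨s h * (s₀ h)⁻¹, memA s hsS h⟩ := by
        apply Subtype.ext
        push_cast
        rw [hμg]
        rw [map_mul s, map_mul s₀, mul_inv_rev]
        group
      rw [Fval s hsS, Fval s hsS, Fval s hsS, key, ofMul_mul, ρ_apply]
      rfl
  have injF : ∀ s ∈ S, ∀ s' ∈ S, F s = F s' → s = s' := by
    intro s hs1 s' hs2 hFe
    ext g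
    have h1 := congrFun hFe g
    rw [Fval s hs1 g, Fval s' hs2 g] at h1
    have h2 := Subtype.ext_iff.mp (Additive.ofMul.injective h1)
    exact mul_right_cancel h2
  rw [← Set.finite_coe_iff]
  exact Finite.of_injective (fun s : ↥S => (⟨F s.1, hFZ s.1 s.2⟩ : ↥Z))
    (fun a b h => Subtype.ext (injF _ a.2 _ b.2 (congrArg Subtype.val h)))


/-- Let `Γ` be a profinite group such that `H^1(Γ, M)` is finite for every finite `Γ`-module `M`
annihilated by a prime `p`.  Then for every extension `1 → A → E → Γ → 1` of profinite groups
whose kernel `A` is abelian and a projective limit of finite modules annihilated by `p`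
(equivalently: abelian and annihilated by `p`), the extension splits if and only if every
finite quotient extension `1 → A/K → E/K → Γ → 1` (for `K ≤ A` closed, normal in `E`, of
finite index in `A`) splits. -/
theorem stmt_5 (p : ℕ) (hp : p.Prime)
    (Γ : Type) [Group Γ] [TopologicalSpace Γ] [IsTopologicalGroup Γ]
    [CompactSpace Γ] [TotallyDisconnectedSpace Γ]
    (hH : ∀ (M : Type) [AddCommGroup M] [TopologicalSpace M] [DiscreteTopology M] [IsTopologicalAddGroup M] [Finite M]
        (ρ : Γ →* Multiplicative (AddAut M)), (∀ m : M, p • m = 0) →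
        Continuous (fun x : Γ × M => (ρ x.1).toAdd x.2) → Finite (ContH1 ρ))
    (E : Type) [Group E] [TopologicalSpace E] [IsTopologicalGroup E]
    [CompactSpace E] [TotallyDisconnectedSpace E]
    (π : E →* Γ) (hπc : Continuous π) (hπs : Function.Surjective π)
    (habel : ∀ a ∈ π.ker, ∀ b ∈ π.ker, a * b = b * a)
    (htors : ∀ a ∈ π.ker, a ^ p = 1) :
    (∃ s : Γ →* E, Continuous s ∧ π.comp s = MonoidHom.id Γ) ↔
    (∀ (K : Subgroup E) (hK : K.Normal) (hle : K ≤ π.ker), IsClosed (K : Set E) →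
      Finite (π.ker ⧸ K.subgroupOf π.ker) →
        ∃ s : Γ →* E ⧸ K, Continuous s ∧
          (QuotientGroup.lift K π (fun x hx => hle hx)).comp s = MonoidHom.id Γ) := by
  classical
  haveI : T1Space Γ := aux_t1
  haveI : T1Space E := aux_t1
  haveI hΓT2 : T2Space Γ := inferInstance
  haveI hET2 : T2Space E := inferInstance
  constructor
  · rintro ⟨s, hsc, hssec⟩ K hK hle hclosed hfin
    refine ⟨(QuotientGroup.mk' K).comp s, ?_, ?_⟩
    · exact QuotientGroup.continuous_mk.comp hsc
    · ext g
      simpa using DFunLike.congr_fun hssec g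
  · intro hsplit
    -- the directed system of open normal subgroups
    set ι := {N : Subgroup E // N.Normal ∧ IsOpen (N : Set E)} with hι
    haveI : Nonempty ι := ⟨⟨⊤, inferInstance, by rw [Subgroup.coe_top]; exact isOpen_univ⟩⟩
    set K : ι → Subgroup E := fun i => i.1 ⊓ π.ker with hKdef
    have hKnormal : ∀ i, (K i).Normal := fun i =>
      { conj_mem := fun x hx g =>
          ⟨i.2.1.conj_mem x hx.1 g, π.normal_ker.conj_mem x hx.2 g⟩ }
    have hKle : ∀ i : ι, K i ≤ π.ker := fun i => inf_le_right
    have hKle' : ∀ i : ι, K i ≤ i.1 := fun i => inf_le_left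
    have hkerclosed : IsClosed ((π.ker : Subgroup E) : Set E) := by
      have : ((π.ker : Subgroup E) : Set E) = π ⁻¹' {1} := by
        ext x; simp [MonoidHom.mem_ker]
      rw [this]
      exact IsClosed.preimage hπc isClosed_singleton
    have hKclosed : ∀ i : ι, IsClosed ((K i : Subgroup E) : Set E) := by
      intro i
      have h1 : IsClosed (i.1 : Set E) := Subgroup.isClosed_of_isOpen i.1 i.2.2
      have : ((K i : Subgroup E) : Set E) = (i.1 : Set E) ∩ (π.ker : Set E) := rfl
      rw [this]
      exact h1.inter hkerclosed
    have hKfin : ∀ i : ι, Finite (π.ker ⧸ (K i).subgroupOf π.ker) := by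
      intro i
      haveI := i.2.1
      haveI : Finite (E ⧸ i.1) := Subgroup.quotient_finite_of_isOpen i.1 i.2.2
      set φ : ↥π.ker →* E ⧸ i.1 := (QuotientGroup.mk' i.1).comp π.ker.subtype with hφ
      have hker : φ.ker = (K i).subgroupOf π.ker := by
        ext x
        simp [hφ, MonoidHom.mem_ker, QuotientGroup.eq_one_iff, Subgroup.mem_subgroupOf,
          hKdef, Subgroup.mem_inf, x.2]
      rw [← hker]
      exact Finite.of_injective _ (QuotientGroup.kerLift_injective φ)
    -- basic instances for the quotients
    haveI hT2 : ∀ i : ι, T2Space (E ⧸ K i) := fun i => by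
      haveI := hKnormal i
      haveI : IsClosed ((K i : Subgroup E) : Set E) := hKclosed i
      infer_instance
    -- the induced projections
    set q : ∀ i : ι, E ⧸ K i →* Γ := fun i =>
      QuotientGroup.lift (nN := hKnormal i) (K i) π (fun x hx => hKle i hx) with hq
    have hq_mk : ∀ (i : ι) (e : E), q i (QuotientGroup.mk e) = π e := fun i e => rfl
    have hqc : ∀ i, Continuous (q i) := by
      intro i
      rw [(QuotientGroup.isQuotientMap_mk (K i)).continuous_iff]
      exact hπc
    have hqs : ∀ i, Function.Surjective (q i) := by
      intro i g
      obtain ⟨e, he⟩ := hπs g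
      exact ⟨QuotientGroup.mk e, he⟩
    -- the sets of splittings
    set S : ∀ i : ι, Set (Γ →* E ⧸ K i) := fun i =>
      {s | Continuous s ∧ (q i).comp s = MonoidHom.id Γ} with hSdef
    have hSne : ∀ i, (S i).Nonempty := by
      intro i
      obtain ⟨s, h1, h2⟩ := hsplit (K i) (hKnormal i) (hKle i) (hKclosed i) (hKfin i)
      exact ⟨s, h1, h2⟩
    have hker_rep : ∀ (i : ι), ∀ a ∈ (q i).ker, ∃ e ∈ π.ker, (QuotientGroup.mk e : E ⧸ K i) = a := by
      intro i a ha
      obtain ⟨e, rfl⟩ := QuotientGroup.mk_surjective a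
      exact ⟨e, ha, rfl⟩
    have hSfin : ∀ i, (S i).Finite := by
      intro i
      haveI := hKnormal i
      haveI := hT2 i
      have habel' : ∀ a ∈ (q i).ker, ∀ b ∈ (q i).ker, a * b = b * a := by
        intro a ha b hb
        obtain ⟨e, he, rfl⟩ := hker_rep i a ha
        obtain ⟨f, hf, rfl⟩ := hker_rep i b hb
        rw [← QuotientGroup.mk_mul, habel e he f hf, QuotientGroup.mk_mul]
      have htors' : ∀ a ∈ (q i).ker, a ^ p = 1 := by
        intro a ha
        obtain ⟨e, he, rfl⟩ := hker_rep i a ha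
        show ((QuotientGroup.mk' (K i)) e) ^ p = 1
        rw [← map_pow, htors e he, map_one]
      have hfin' : Finite ↥(q i).ker := by
        haveI := hKfin i
        set φ' : ↥π.ker →* ↥(q i).ker :=
          { toFun := fun x => ⟨QuotientGroup.mk x.1, by
              show q i (QuotientGroup.mk x.1) = 1
              rw [hq_mk]
              exact x.2⟩
            map_one' := by ext; simp
            map_mul' := fun x y => by ext; simp } with hφ'
        have hφ'ker : ∀ x ∈ (K i).subgroupOf π.ker, φ' x = 1 := by
          intro x hx
          apply Subtype.ext
          show (QuotientGroup.mk (x.1 : E) : E ⧸ K i) = 1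
          exact (QuotientGroup.eq_one_iff _).mpr (Subgroup.mem_subgroupOf.mp hx)
        set ψ := QuotientGroup.lift ((K i).subgroupOf π.ker) φ' (fun x hx => MonoidHom.mem_ker.mpr (hφ'ker x hx)) with hψ
        apply Finite.of_surjective ψ
        rintro ⟨a, ha⟩
        obtain ⟨e, he, rfl⟩ := hker_rep i a ha
        refine ⟨QuotientGroup.mk ⟨e, he⟩, ?_⟩
        rw [hψ, QuotientGroup.lift_mk']
        rfl
      exact splittings_finite p Γ hH (E ⧸ K i) (q i) (hqc i) (hqs i) habel' htors' hfin'
    -- the compact sets of pointwise lifts of splittings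
    set T : ι → Set (Γ → E) := fun i =>
      ⋃ s ∈ S i, {σ : Γ → E | ∀ g, (QuotientGroup.mk (σ g) : E ⧸ K i) = s g} with hTdef
    have hTclosed : ∀ i, IsClosed (T i) := by
      intro i
      haveI := hT2 i
      apply (hSfin i).isClosed_biUnion
      intro s _
      have : {σ : Γ → E | ∀ g, (QuotientGroup.mk (σ g) : E ⧸ K i) = s g}
          = ⋂ g, (fun σ : Γ → E => σ g) ⁻¹' (QuotientGroup.mk ⁻¹' {s g}) := by
        ext σ; simp
      rw [this]
      exact isClosed_iInter fun g =>
        IsClosed.preimage (QuotientGroup.continuous_mk.comp (continuous_apply g))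
          isClosed_singleton
    have hTcompact : ∀ i, IsCompact (T i) := fun i => (hTclosed i).isCompact
    have hTne : ∀ i, (T i).Nonempty := by
      intro i
      obtain ⟨s, hs⟩ := hSne i
      refine ⟨fun g => (QuotientGroup.mk_surjective (s g)).choose, ?_⟩
      rw [hTdef]
      refine Set.mem_iUnion₂.mpr ⟨s, hs, fun g => ?_⟩
      exact (QuotientGroup.mk_surjective (s g)).choose_spec
    have hTmono : ∀ i k : ι, K k ≤ K i → T k ⊆ T i := by
      intro i k hkk σ hσ
      haveI := hKnormal i
      haveI := hKnormal k
      rw [hTdef] at hσ ⊢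
      obtain ⟨s, hs, hmatch⟩ := Set.mem_iUnion₂.mp hσ
      set m : E ⧸ K k →* E ⧸ K i :=
        QuotientGroup.map (K k) (K i) (MonoidHom.id E) (fun x hx => hkk hx) with hm
      have hm_mk : ∀ e : E, m (QuotientGroup.mk e) = QuotientGroup.mk e := fun e =>
        QuotientGroup.map_mk (K k) (K i) (MonoidHom.id E) _ e
      have hmc : Continuous m := by
        rw [(QuotientGroup.isQuotientMap_mk (K k)).continuous_iff]
        have : (m ∘ QuotientGroup.mk : E → E ⧸ K i) = QuotientGroup.mk := funext hm_mk
        rw [this]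
        exact QuotientGroup.continuous_mk
      refine Set.mem_iUnion₂.mpr ⟨m.comp s, ⟨hmc.comp hs.1, ?_⟩, fun g => ?_⟩
      · ext g
        obtain ⟨e, he⟩ := QuotientGroup.mk_surjective (s g)
        have h1 : q i (m (s g)) = q k (s g) := by rw [← he, hm_mk, hq_mk, hq_mk]
        show q i (m (s g)) = g
        rw [h1]
        exact DFunLike.congr_fun hs.2 g
      · show (QuotientGroup.mk (σ g) : E ⧸ K i) = m (s g)
        rw [← hmatch g, hm_mk]
    have hTdir : Directed (· ⊇ ·) T := by
      intro i j
      refine ⟨⟨i.1 ⊓ j.1, ?_, ?_⟩, ?_, ?_⟩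
      · haveI := i.2.1; haveI := j.2.1
        infer_instance
      · have : ((i.1 ⊓ j.1 : Subgroup E) : Set E) = (i.1 : Set E) ∩ (j.1 : Set E) := rfl
        rw [this]
        exact i.2.2.inter j.2.2
      · exact hTmono i _ (inf_le_inf_right _ inf_le_left)
      · exact hTmono j _ (inf_le_inf_right _ inf_le_right)
    -- a common element
    obtain ⟨σ, hσ⟩ := IsCompact.nonempty_iInter_of_directed_nonempty_isCompact_isClosed
      T hTdir hTne hTcompact hTclosed
    have hσi : ∀ i : ι, σ ∈ T i := Set.mem_iInter.mp hσ
    choose s hsS hmatch using fun i : ι => Set.mem_iUnion₂.mp (hσi i)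
    -- separation by open normal subgroups
    have hsep : ∀ e : E, (∀ i : ι, e ∈ i.1) → e = 1 := by
      intro e he
      by_contra hne1
      obtain ⟨U, hU, h1U, heU⟩ := exists_isClopen_of_totally_separated
        (show (1 : E) ≠ e from fun h => hne1 h.symm)
      obtain ⟨H, hH'⟩ := IsTopologicalGroup.exist_openNormalSubgroup_sub_clopen_nhds_of_one hU h1U
      exact heU (hH' (he ⟨H.toOpenSubgroup.toSubgroup, H.isNormal', H.toOpenSubgroup.isOpen⟩))
    -- the section
    have hπσ : ∀ g, π (σ g) = g := by
      intro g
      have i := Classical.arbitrary ι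
      have h1 : q i (QuotientGroup.mk (σ g)) = q i (s i g) := by rw [hmatch i g]
      rw [hq_mk] at h1
      rw [h1]
      exact DFunLike.congr_fun (hsS i).2 g
    have hmul : ∀ g h : Γ, σ (g * h) = σ g * σ h := by
      intro g h
      have key : ∀ i : ι, (σ (g * h))⁻¹ * (σ g * σ h) ∈ K i := by
        intro i
        haveI := hKnormal i
        have h1 : (QuotientGroup.mk (σ (g * h)) : E ⧸ K i) = QuotientGroup.mk (σ g * σ h) := by
          rw [hmatch i (g * h), QuotientGroup.mk_mul, hmatch i g, hmatch i h, map_mul]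
        exact QuotientGroup.eq.mp h1
      have := hsep _ (fun i => hKle' i (key i))
      rwa [inv_mul_eq_one] at this
    -- continuity
    have hcont : Continuous σ := by
      set Φ : E → ∀ i : ι, E ⧸ K i := fun e i => QuotientGroup.mk e with hΦ
      have hΦc : Continuous Φ := continuous_pi fun i => QuotientGroup.continuous_mk
      have hΦinj : Function.Injective Φ := by
        intro a b hab
        have h1 : ∀ i : ι, a⁻¹ * b ∈ K i := fun i => QuotientGroup.eq.mp (congrFun hab i)
        have := hsep _ (fun i => hKle' i (h1 i))
        rwa [inv_mul_eq_one] at this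
      have hemb := hΦc.isClosedEmbedding hΦinj
      rw [hemb.toIsEmbedding.continuous_iff]
      have : (Φ ∘ σ : Γ → ∀ i : ι, E ⧸ K i) = fun g i => s i g :=
        funext fun g => funext fun i => hmatch i g
      rw [this]
      exact continuous_pi fun i => (hsS i).1
    exact ⟨MonoidHom.mk' σ hmul, hcont, by ext g; exact hπσ g⟩
end
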